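/- If h and k are positive integers with gcd(h,k) = 1, then ∑_{r=1}^{k-1} ⌊hr/k⌋² = 2h·s(k,h) + (2hk - 3h - k + 3)(h-1)/6, where s(k,h) is the Dedekind sum. -/

import Mathlib

/-!
Writing `⌊hr/k⌋²` as the sum of the odd numbers `2s - 1` with `1 ≤ s ≤ ⌊hr/k⌋` and counting the
lattice points `(r, s)` the other way round turns the left side into
`∑_{s<h} (2s - 1)(k - 1 - ⌊ks/h⌋)`; coprimality keeps lattice points off the line `hr = ks`.
Expanding `s(k, h)` produces the same `∑ s⌊ks/h⌋`, and the leftover `∑ ⌊ks/h⌋ = (h - 1)(k - 1)/2`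
follows from the reflection `s ↦ h - s`.
-/

noncomputable def dedekindSum (h k : ℤ) : ℝ :=
  ∑ r ∈ Finset.Ico (1 : ℤ) k,
    ((r : ℝ) / k) * ((h * r : ℝ) / k - ⌊(h * r : ℝ) / k⌋ - 1 / 2)

open Finset

theorem Int.floor_intCast_mul_div {K : Type*} [Field K] [LinearOrder K] [IsOrderedRing K]
    [FloorRing K] (a b : ℤ) {c : ℤ} (hc : 0 < c) : ⌊(a * b : K) / c⌋ = a * b / c := by
  rw [← Int.cast_mul, Int.floor_div_cast_of_nonneg hc.le, Int.floor_intCast]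

section PowerSums

variable {R : Type*} [CommRing R] {n : ℤ}

theorem Int.sum_Ico_one_cast_mul_two (hn : 1 ≤ n) :
    (∑ s ∈ Ico 1 n, (s : R)) * 2 = n * (n - 1) := by
  induction n, hn using Int.leInduction with
  | base => simp
  | succ n hn ih =>
    rw [← sum_Ico_add_eq_sum_Ico_add_one hn, add_mul, ih]
    push_cast
    ring

theorem Int.sum_Ico_one_cast_sq_mul_six (hn : 1 ≤ n) :
    (∑ s ∈ Ico 1 n, (s : R) ^ 2) * 6 = n * (n - 1) * (2 * n - 1) := by
  induction n, hn using Int.leInduction with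
  | base => simp
  | succ n hn ih =>
    rw [← sum_Ico_add_eq_sum_Ico_add_one hn, add_mul, ih]
    push_cast
    ring

theorem Int.sum_Ico_one_two_mul_sub_one (hn : 1 ≤ n) :
    ∑ s ∈ Ico 1 n, (2 * s - 1) = (n - 1) ^ 2 := by
  induction n, hn using Int.leInduction with
  | base => simp
  | succ n hn ih =>
    rw [← sum_Ico_add_eq_sum_Ico_add_one hn, ih]
    ring

end PowerSums

theorem Int.sq_eq_sum_Ico_ite {n h : ℤ} (hn : 0 ≤ n) (hnh : n < h) :
    n ^ 2 = ∑ s ∈ Ico 1 h, if s ≤ n then 2 * s - 1 else 0 := by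
  have hfilter : (Ico 1 h).filter (· ≤ n) = Ico 1 (n + 1) := by
    ext s
    simp only [mem_filter, mem_Ico]
    omega
  rw [← sum_filter, hfilter, Int.sum_Ico_one_two_mul_sub_one (by omega), add_sub_cancel_right]

theorem IsCoprime.not_dvd_mul_of_pos_of_lt {h k s : ℤ} (hco : IsCoprime h k) (hs : 0 < s)
    (hsh : s < h) : ¬ h ∣ k * s :=
  fun hdvd => (Int.le_of_dvd hs (hco.dvd_of_dvd_mul_left hdvd)).not_gt hsh

theorem Int.filter_le_mul_ediv_eq_Ico {h k s : ℤ} (hh : 0 < h) (hk : 0 < k) (hs : 0 ≤ s)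
    (hdvd : ¬ h ∣ k * s) :
    (Ico 1 k).filter (fun r => s ≤ h * r / k) = Ico (k * s / h + 1) k := by
  have hnonneg : 0 ≤ k * s / h := Int.ediv_nonneg (by positivity) hh.le
  ext r
  have hne : k * s ≠ h * r := fun he => hdvd ⟨r, he⟩
  have hlt : k * s / h < r ↔ k * s < h * r := by rw [Int.ediv_lt_iff_lt_mul hh, mul_comm r]
  simp only [mem_filter, mem_Ico, Int.le_ediv_iff_mul_le hk, Int.add_one_le_iff, mul_comm s k]
  omega

theorem Int.sum_sq_ediv_eq_sum_odd_mul {h k : ℤ} (hh : 0 < h) (hk : 0 < k)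
    (hco : IsCoprime h k) :
    ∑ r ∈ Ico 1 k, (h * r / k) ^ 2 = ∑ s ∈ Ico 1 h, (2 * s - 1) * (k - 1 - k * s / h) := by
  calc ∑ r ∈ Ico 1 k, (h * r / k) ^ 2
      = ∑ r ∈ Ico 1 k, ∑ s ∈ Ico 1 h, if s ≤ h * r / k then 2 * s - 1 else 0 := by
        refine sum_congr rfl fun r hr => Int.sq_eq_sum_Ico_ite ?_ ?_ <;> rw [mem_Ico] at hr
        · exact Int.ediv_nonneg (mul_nonneg hh.le (by omega)) hk.le
        · rw [Int.ediv_lt_iff_lt_mul hk]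
          nlinarith
    _ = ∑ s ∈ Ico 1 h, ∑ r ∈ Ico 1 k, if s ≤ h * r / k then 2 * s - 1 else 0 := sum_comm
    _ = ∑ s ∈ Ico 1 h, (2 * s - 1) * (k - 1 - k * s / h) := by
        refine sum_congr rfl fun s hs => ?_
        rw [mem_Ico] at hs
        have hlt : k * s / h < k := by
          rw [Int.ediv_lt_iff_lt_mul hh]
          nlinarith
        rw [← sum_filter, Int.filter_le_mul_ediv_eq_Ico hh hk (by omega)
          (hco.not_dvd_mul_of_pos_of_lt (by omega) hs.2), sum_const, Int.card_Ico, nsmul_eq_mul,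
          Int.toNat_of_nonneg (by omega)]
        ring

theorem Int.sum_sq_ediv_eq {h k : ℤ} (hh : 0 < h) (hk : 0 < k) (hco : IsCoprime h k) :
    ∑ r ∈ Ico 1 k, (h * r / k) ^ 2 =
      (k - 1) * (h - 1) ^ 2 - 2 * ∑ s ∈ Ico 1 h, s * (k * s / h) + ∑ s ∈ Ico 1 h, k * s / h := by
  rw [Int.sum_sq_ediv_eq_sum_odd_mul hh hk hco, ← Int.sum_Ico_one_two_mul_sub_one hh,
    mul_sum, mul_sum, ← sum_sub_distrib, ← sum_add_distrib]
  exact sum_congr rfl fun _ _ => by ring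

theorem Int.mul_ediv_add_mul_sub_ediv {h k s : ℤ} (hh : 0 < h) (hdvd : ¬ h ∣ k * s) :
    k * s / h + k * (h - s) / h = k - 1 := by
  rw [show k * (h - s) = -(k * s) + k * h by ring, Int.add_mul_ediv_right _ _ hh.ne',
    Int.neg_ediv, if_neg hdvd, Int.sign_eq_one_of_pos hh]
  ring

theorem Int.two_mul_sum_Ico_mul_ediv {h k : ℤ} (hh : 0 < h) (hco : IsCoprime h k) :
    2 * ∑ s ∈ Ico 1 h, k * s / h = (h - 1) * (k - 1) := by
  have hreflect : ∑ s ∈ Ico 1 h, k * (h - s) / h = ∑ s ∈ Ico 1 h, k * s / h :=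
    sum_nbij' (h - ·) (h - ·) (fun s hs => by simp only [mem_Ico] at hs ⊢; omega)
      (fun s hs => by simp only [mem_Ico] at hs ⊢; omega) (fun _ _ => by ring)
      (fun _ _ => by ring) (fun _ _ => by ring_nf)
  calc 2 * ∑ s ∈ Ico 1 h, k * s / h
      = ∑ s ∈ Ico 1 h, (k * s / h + k * (h - s) / h) := by rw [sum_add_distrib, hreflect, two_mul]
    _ = ∑ s ∈ Ico 1 h, (k - 1) := sum_congr rfl fun s hs => by
        rw [mem_Ico] at hs
        exact Int.mul_ediv_add_mul_sub_ediv hh (hco.not_dvd_mul_of_pos_of_lt (by omega) hs.2)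
    _ = (h - 1) * (k - 1) := by
        rw [sum_const, Int.card_Ico, nsmul_eq_mul, Int.toNat_of_nonneg (by omega)]

theorem two_mul_mul_dedekindSum (k : ℤ) {h : ℤ} (hh : 0 < h) :
    2 * h * dedekindSum k h = k * (h - 1) * (2 * h - 1) / 3 - h * (h - 1) / 2 -
      2 * ∑ s ∈ Ico 1 h, (s : ℝ) * ⌊(k * s : ℝ) / h⌋ := by
  have hid := Int.sum_Ico_one_cast_mul_two (R := ℝ) hh
  have hsq := Int.sum_Ico_one_cast_sq_mul_six (R := ℝ) hh
  have hexpand : 2 * h * dedekindSum k h = 2 * k / h * ∑ s ∈ Ico 1 h, (s : ℝ) ^ 2 -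
      ∑ s ∈ Ico 1 h, (s : ℝ) - 2 * ∑ s ∈ Ico 1 h, (s : ℝ) * ⌊(k * s : ℝ) / h⌋ := by
    rw [dedekindSum, mul_sum, mul_sum, mul_sum, ← sum_sub_distrib, ← sum_sub_distrib]
    refine sum_congr rfl fun s _ => ?_
    field_simp
    ring
  rw [hexpand]
  linear_combination (norm := skip) k / (3 * h) * hsq - hid / 2
  field_simp
  ring

theorem sum_floor_sq (h k : ℤ) (hh : 0 < h) (hk : 0 < k) (hco : IsCoprime h k) :
    ((∑ r ∈ Finset.Ico (1 : ℤ) k, (⌊(h * r : ℝ) / k⌋ : ℝ) ^ 2)) =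
      2 * h * dedekindSum k h + (2 * h * k - 3 * h - k + 3) * (h - 1) / 6 := by
  have hlattice := congrArg (Int.cast : ℤ → ℝ) (Int.sum_sq_ediv_eq hh hk hco)
  have hrecip := congrArg (Int.cast : ℤ → ℝ) (Int.two_mul_sum_Ico_mul_ediv hh hco)
  have hded := two_mul_mul_dedekindSum k hh
  simp only [Int.floor_intCast_mul_div _ _ hh, Int.floor_intCast_mul_div _ _ hk] at hded ⊢
  push_cast at hlattice hrecip
  linear_combination hlattice - hded + hrecip / 2
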